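/- arXiv:math/0507603 — 2 statements merged into one kernel-verified Lean document; each statement's English description precedes it below -/
import Mathlib

section
/- Let X be a nonzero real normed space and equip its unit sphere S_X with the kernel k(x,y) := ‖x−y‖. Then the average interval of S_X equals the rendezvous interval of S_X and both are nonempty: q̲(S_X,S_X) = M(S_X) ≤ M̄(S_X) = q(S_X,S_X); that is, 𝓐(X) = 𝓡(X) ≠ ∅. -/
/-!
Empirical measures `n⁻¹ ∑ δ_{w_j}` of points of the sphere are tight probability measures whose
potentials are exactly the Chebyshev averages, which gives `M ≤ q̲` and `q ≤ M̄`. Conversely a tight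
probability measure on the sphere lives on a separable set, so the identity is an `L¹`-limit of
simple functions with values in the sphere; as `‖x - ·‖` is 1-Lipschitz and bounded by 2 there,
the potential is uniformly approximated by that of a finitely supported measure, and rounding its
weights to multiples of `1/N` turns it into an empirical measure. This gives `q̲ ≤ M` and `M̄ ≤ q`.
Finally `M ≤ M̄` holds for every symmetric kernel: the double average of `k (v_i, w_j)` lies above
the minimum of one family's averages and below the maximum of the other's.
-/

open MeasureTheory ENNReal
open scoped BigOperators

namespace Rendezvous

variable {X : Type*}

/-- The `n`-th Chebyshev constant `Mₙ(H,L)` of `L` with respect to `H` for the kernel `k`. -/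
noncomputable def chebMn (k : X → X → ℝ≥0∞) (n : ℕ) (H L : Set X) : ℝ≥0∞ :=
  ⨆ w : Fin n → H, ⨅ x : L, (∑ j, k (x : X) ((w j : X))) / (n : ℝ≥0∞)

/-- The `n`-th dual Chebyshev constant `M̄ₙ(H,L)`. -/
noncomputable def chebMnDual (k : X → X → ℝ≥0∞) (n : ℕ) (H L : Set X) : ℝ≥0∞ :=
  ⨅ w : Fin n → H, ⨆ x : L, (∑ j, k (x : X) ((w j : X))) / (n : ℝ≥0∞)

/-- The Chebyshev constant `M(H,L) = sup_{n ≥ 1} Mₙ(H,L)`. -/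
noncomputable def chebM (k : X → X → ℝ≥0∞) (H L : Set X) : ℝ≥0∞ :=
  ⨆ n : ℕ, ⨆ (_ : 1 ≤ n), chebMn k n H L

/-- The dual Chebyshev constant `M̄(H,L) = inf_{n ≥ 1} M̄ₙ(H,L)`. -/
noncomputable def chebMDual (k : X → X → ℝ≥0∞) (H L : Set X) : ℝ≥0∞ :=
  ⨅ n : ℕ, ⨅ (_ : 1 ≤ n), chebMnDual k n H L

/-- The potential `U^μ(x) = ∫ k(x,y) dμ(y)` of a measure. -/
noncomputable def pot [MeasurableSpace X] (k : X → X → ℝ≥0∞) (μ : Measure X) (x : X) : ℝ≥0∞ :=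
  ∫⁻ y, k x y ∂μ

/-- `μ` is a tight (inner regular w.r.t. compact sets) Borel probability measure
concentrated on `H`. -/
def TightProbOn [TopologicalSpace X] [MeasurableSpace X] (μ : Measure X) (H : Set X) : Prop :=
  IsProbabilityMeasure μ ∧ μ.InnerRegular ∧ μ Hᶜ = 0

/-- The quasi-uniform energy `q(H,L) = inf_{μ ∈ M₁(H)} sup_{x ∈ L} U^μ(x)`. -/
noncomputable def qUp [TopologicalSpace X] [MeasurableSpace X] (k : X → X → ℝ≥0∞)
    (H L : Set X) : ℝ≥0∞ :=
  ⨅ (μ : Measure X) (_ : TightProbOn μ H), ⨆ x : L, pot k μ (x : X)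

/-- The dual quasi-uniform energy `q̲(H,L) = sup_{μ ∈ M₁(H)} inf_{x ∈ L} U^μ(x)`. -/
noncomputable def qLow [TopologicalSpace X] [MeasurableSpace X] (k : X → X → ℝ≥0∞)
    (H L : Set X) : ℝ≥0∞ :=
  ⨆ (μ : Measure X) (_ : TightProbOn μ H), ⨅ x : L, pot k μ (x : X)

end Rendezvous

open Rendezvous

open Filter Topology TopologicalSpace Bornology
open scoped NNReal

section Auxiliary

variable {ι : Type*}

lemma ENNReal.le_sum_div_card [Fintype ι] {A : ℝ≥0∞} {a : ι → ℝ≥0∞} (hι : Fintype.card ι ≠ 0)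
    (h : ∀ i, A ≤ a i) :
    A ≤ (∑ i, a i) / Fintype.card ι := by
  rw [ENNReal.le_div_iff_mul_le (by exact_mod_cast Or.inl hι) (Or.inl (natCast_ne_top _)),
    mul_comm, ← nsmul_eq_mul, ← Finset.card_univ, ← Finset.sum_const]
  exact Finset.sum_le_sum fun i _ => h i

lemma ENNReal.sum_div_card_le [Fintype ι] {B : ℝ≥0∞} {a : ι → ℝ≥0∞} (h : ∀ i, a i ≤ B) :
    (∑ i, a i) / Fintype.card ι ≤ B := by
  refine ENNReal.div_le_of_le_mul ?_
  rw [mul_comm, ← nsmul_eq_mul, ← Finset.card_univ, ← Finset.sum_const]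
  exact Finset.sum_le_sum fun i _ => h i

lemma ENNReal.sum_mul_le_sum_mul_add_card_mul {s : Finset ι} {a b g : ι → ℝ≥0∞} {D : ℝ≥0∞}
    (hab : ∀ i ∈ s, a i ≤ b i + 1) (hg : ∀ i ∈ s, g i ≤ D) :
    ∑ i ∈ s, a i * g i ≤ ∑ i ∈ s, b i * g i + s.card * D := by
  calc ∑ i ∈ s, a i * g i ≤ ∑ i ∈ s, (b i * g i + D) :=
        Finset.sum_le_sum fun i hi => by
          calc a i * g i ≤ (b i + 1) * g i := by gcongr; exact hab i hi
            _ ≤ b i * g i + D := by rw [add_mul, one_mul]; gcongr; exact hg i hi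
    _ = ∑ i ∈ s, b i * g i + s.card * D := by
        rw [Finset.sum_add_distrib, Finset.sum_const, nsmul_eq_mul]

lemma Finset.exists_nat_round_sum_eq (s : Finset ι) (p : ι → ℝ≥0) {N : ℕ}
    (hp : ∑ i ∈ s, p i = N) :
    ∃ m : ι → ℕ, ∑ i ∈ s, m i = N ∧ ∀ i ∈ s, (m i : ℝ≥0) ≤ p i + 1 ∧ p i ≤ m i + 1 := by
  classical
  have hfloor_le : ∑ i ∈ s, ⌊p i⌋₊ ≤ N := by
    have : (∑ i ∈ s, ⌊p i⌋₊ : ℝ≥0) ≤ N := hp ▸ Finset.sum_le_sum fun i _ => Nat.floor_le (p i).2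
    exact_mod_cast this
  have hle_floor : N ≤ ∑ i ∈ s, ⌊p i⌋₊ + s.card := by
    have : (N : ℝ≥0) ≤ ∑ i ∈ s, ((⌊p i⌋₊ : ℝ≥0) + 1) :=
      hp ▸ Finset.sum_le_sum fun i _ => (Nat.lt_floor_add_one (p i)).le
    rw [Finset.sum_add_distrib, Finset.sum_const, nsmul_one] at this
    exact_mod_cast this
  obtain ⟨t, hts, ht⟩ :=
    Finset.exists_subset_card_eq (s := s) (n := N - ∑ i ∈ s, ⌊p i⌋₊) (by omega)
  refine ⟨fun i => ⌊p i⌋₊ + if i ∈ t then 1 else 0, ?_, fun i _ => ⟨?_, ?_⟩⟩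
  · rw [Finset.sum_add_distrib, Finset.sum_boole, Finset.filter_mem_eq_inter,
      Finset.inter_eq_right.2 hts, ht, Nat.cast_id]
    omega
  · push_cast
    gcongr
    · exact Nat.floor_le (p i).2
    · split_ifs <;> simp
  · push_cast
    exact (Nat.lt_floor_add_one (p i)).le.trans (by gcongr; exact le_self_add)

lemma Finset.exists_fin_sum_comp_eq_sum_nsmul {M : Type*} [AddCommMonoid M] (s : Finset ι)
    (m : ι → ℕ) : ∃ w : Fin (∑ i ∈ s, m i) → ι, (∀ j, w j ∈ s) ∧
      ∀ g : ι → M, ∑ j, g (w j) = ∑ i ∈ s, m i • g i := by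
  have hcard : Fintype.card (Σ i : s, Fin (m i)) = ∑ i ∈ s, m i := by
    rw [Fintype.card_sigma, Finset.sum_coe_sort s fun i => Fintype.card (Fin (m i))]
    simp
  let e := Fintype.equivFinOfCardEq hcard
  refine ⟨fun j => (e.symm j).1, fun j => (e.symm j).1.2, fun g => ?_⟩
  rw [e.symm.sum_comp (fun σ => g σ.1), Fintype.sum_sigma, ← Finset.sum_coe_sort s]
  simp

instance MeasureTheory.Measure.innerRegular_dirac {X : Type*} [TopologicalSpace X]
    [MeasurableSpace X] [MeasurableSingletonClass X] (a : X) : (Measure.dirac a).InnerRegular := by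
  refine ⟨fun s _ r hr => ⟨{a}, ?_, isCompact_singleton, by simpa using hr.trans_le prob_le_one⟩⟩
  have ha : a ∈ s := by
    by_contra ha
    simp [ha] at hr
  simpa using ha

lemma lintegral_edist_le_add {α E : Type*} [MeasurableSpace α] [PseudoEMetricSpace E]
    {μ : Measure α} {f g : α → E} (x : E) (hg : AEMeasurable (fun y => edist x (g y)) μ) :
    ∫⁻ y, edist x (f y) ∂μ ≤ ∫⁻ y, edist x (g y) ∂μ + ∫⁻ y, edist (f y) (g y) ∂μ := by
  rw [← lintegral_add_left' hg]
  exact lintegral_mono fun y => edist_triangle_right _ _ _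

end Auxiliary

namespace Rendezvous

section Kernel

variable {X : Type*} {k : X → X → ℝ≥0∞} {H L : Set X}

lemma chebMn_le_chebMnDual (hk : ∀ x y, k x y = k y x) {n m : ℕ} (hm : m ≠ 0) :
    chebMn k n H H ≤ chebMnDual k m H H := by
  refine iSup_le fun w => le_iInf fun v => ?_
  calc ⨅ x : H, (∑ j, k x (w j)) / (n : ℝ≥0∞)
      ≤ (∑ i, (∑ j, k (v i) (w j)) / (n : ℝ≥0∞)) / (m : ℝ≥0∞) := by
        simpa using ENNReal.le_sum_div_card (by simpa using hm) fun i => iInf_le _ (v i)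
    _ = (∑ j, (∑ i, k (w j) (v i)) / (m : ℝ≥0∞)) / (n : ℝ≥0∞) := by
        simp only [div_eq_mul_inv, Finset.sum_mul, hk (v _)]
        rw [Finset.sum_comm]
        exact Finset.sum_congr rfl fun _ _ => Finset.sum_congr rfl fun _ _ => mul_right_comm ..
    _ ≤ ⨆ x : H, (∑ i, k x (v i)) / (m : ℝ≥0∞) := by
        simpa using ENNReal.sum_div_card_le fun j =>
          le_iSup (fun x : H => (∑ i, k x (v i)) / (m : ℝ≥0∞)) (w j)

lemma chebM_le_chebMDual (hk : ∀ x y, k x y = k y x) : chebM k H H ≤ chebMDual k H H :=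
  iSup₂_le fun _ _ => le_iInf₂ fun _ hm => chebMn_le_chebMnDual hk (by omega)

lemma exists_fin_approx_weighted_sum {F : Finset X} (hF : ∀ c ∈ F, c ∈ H) {p : X → ℝ≥0∞}
    (hp : ∑ c ∈ F, p c = 1) {D : ℝ≥0∞} (hD : D ≠ ⊤) (hk : ∀ x ∈ L, ∀ y ∈ H, k x y ≤ D)
    {ε : ℝ≥0∞} (hε : 0 < ε) :
    ∃ n ≠ 0, ∃ w : Fin n → H, ∀ x ∈ L,
      ∑ c ∈ F, k x c * p c ≤ (∑ j, k x (w j)) / n + ε ∧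
      (∑ j, k x (w j)) / n ≤ ∑ c ∈ F, k x c * p c + ε := by
  have hlim : Tendsto (fun N : ℕ => F.card * D * (N : ℝ≥0∞)⁻¹) atTop (𝓝 0) := by
    simpa using ENNReal.Tendsto.const_mul ENNReal.tendsto_inv_nat_nhds_zero
      (Or.inr (ENNReal.mul_ne_top (natCast_ne_top _) hD))
  obtain ⟨N, hN, hNε⟩ := ((eventually_ne_atTop 0).and (hlim.eventually (gt_mem_nhds hε))).exists
  have hp_top : ∀ c ∈ F, p c ≠ ⊤ := fun c hc =>
    ne_top_of_le_ne_top one_ne_top (hp ▸ Finset.single_le_sum (fun _ _ => bot_le) hc)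
  have hsum : ∑ c ∈ F, (N : ℝ≥0) * (p c).toNNReal = N := by
    rw [← Finset.mul_sum, ← ENNReal.toNNReal_sum hp_top, hp, ENNReal.toNNReal_one, mul_one]
  obtain ⟨m, hmN, hm⟩ := Finset.exists_nat_round_sum_eq F _ hsum
  obtain ⟨w, hwF, hw⟩ := Finset.exists_fin_sum_comp_eq_sum_nsmul (M := ℝ≥0∞) F m
  have hcast : ∀ c ∈ F, ((N : ℝ≥0) * (p c).toNNReal : ℝ≥0∞) = N * p c := fun c hc => by
    rw [ENNReal.coe_toNNReal (hp_top c hc), ENNReal.coe_natCast]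
  have hmp : ∀ c ∈ F, (m c : ℝ≥0∞) ≤ N * p c + 1 := fun c hc => by
    rw [← hcast c hc]; exact_mod_cast (hm c hc).1
  have hpm : ∀ c ∈ F, N * p c ≤ (m c : ℝ≥0∞) + 1 := fun c hc => by
    rw [← hcast c hc]; exact_mod_cast (hm c hc).2
  refine ⟨∑ c ∈ F, m c, hmN ▸ hN, fun j => ⟨w j, hF _ (hwF j)⟩, fun x hx => ?_⟩
  have hkD : ∀ c ∈ F, k x c ≤ D := fun c hc => hk x hx c (hF c hc)
  have hN0 : (N : ℝ≥0∞) ≠ 0 := Nat.cast_ne_zero.2 hN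
  simp only [hw (k x), hmN, nsmul_eq_mul]
  set P := ∑ c ∈ F, k x c * p c
  have hPN : P * N = ∑ c ∈ F, N * p c * k x c := by
    rw [Finset.sum_mul]; exact Finset.sum_congr rfl fun c _ => by ring
  have hE : F.card * D / N ≤ ε := by rw [div_eq_mul_inv]; exact hNε.le
  constructor
  · calc P = P * N / N := (ENNReal.mul_div_cancel_right hN0 (natCast_ne_top N)).symm
      _ ≤ (∑ c ∈ F, m c * k x c + F.card * D) / N := by
          rw [hPN]; gcongr; exact ENNReal.sum_mul_le_sum_mul_add_card_mul hpm hkD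
      _ ≤ (∑ c ∈ F, m c * k x c) / N + ε := by rw [ENNReal.add_div]; gcongr
  · calc (∑ c ∈ F, m c * k x c) / N ≤ (P * N + F.card * D) / N := by
          rw [hPN]; gcongr; exact ENNReal.sum_mul_le_sum_mul_add_card_mul hmp hkD
      _ ≤ P + ε := by
          rw [ENNReal.add_div, ENNReal.mul_div_cancel_right hN0 (natCast_ne_top N)]; gcongr

section Empirical

variable [MeasurableSpace X]

noncomputable def empiricalMeasure {n : ℕ} (w : Fin n → X) : Measure X :=
  (n : ℝ≥0∞)⁻¹ • ∑ j, Measure.dirac (w j)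

variable [MeasurableSingletonClass X]

lemma pot_empiricalMeasure {n : ℕ} (w : Fin n → X) (x : X) :
    pot k (empiricalMeasure w) x = (∑ j, k x (w j)) / n := by
  simp only [pot, empiricalMeasure, lintegral_smul_measure, lintegral_finsetSum_measure,
    lintegral_dirac, smul_eq_mul, ENNReal.div_eq_inv_mul]

lemma tightProbOn_empiricalMeasure [TopologicalSpace X] {n : ℕ} (hn : n ≠ 0) (w : Fin n → H) :
    TightProbOn (empiricalMeasure fun j => (w j : X)) H := by
  refine ⟨⟨?_⟩, inferInstanceAs (Measure.InnerRegular (_ • _)), ?_⟩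
  · simp [empiricalMeasure, ENNReal.inv_mul_cancel (Nat.cast_ne_zero.2 hn) (natCast_ne_top n)]
  · simp [empiricalMeasure, Measure.dirac_apply]

end Empirical

section Approximation

variable [TopologicalSpace X] [MeasurableSpace X]

lemma chebM_le_qLow [MeasurableSingletonClass X] : chebM k H L ≤ qLow k H L := by
  refine iSup₂_le fun n hn => iSup_le fun w => ?_
  refine le_iSup₂_of_le _ (tightProbOn_empiricalMeasure (by omega) w) (le_of_eq ?_)
  simp only [pot_empiricalMeasure]

lemma qUp_le_chebMDual [MeasurableSingletonClass X] : qUp k H L ≤ chebMDual k H L := by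
  refine le_iInf₂ fun n hn => le_iInf fun w => ?_
  refine iInf₂_le_of_le _ (tightProbOn_empiricalMeasure (by omega) w) (le_of_eq ?_)
  simp only [pot_empiricalMeasure]

lemma qLow_le_chebM_of_approx (h : ∀ μ, TightProbOn μ H → ∀ ε : ℝ≥0∞, 0 < ε →
      ∃ n ≠ 0, ∃ w : Fin n → H, ∀ x ∈ L, pot k μ x ≤ (∑ j, k x (w j)) / n + ε) :
    qLow k H L ≤ chebM k H L := by
  refine iSup₂_le fun μ hμ => ENNReal.le_of_forall_pos_le_add fun ε hε _ => ?_
  obtain ⟨n, hn, w, hw⟩ := h μ hμ ε (by exact_mod_cast hε)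
  calc ⨅ x : L, pot k μ x
      ≤ ⨅ x : L, ((∑ j, k x (w j)) / n + ε) := iInf_mono fun x => hw x x.2
    _ = (⨅ x : L, (∑ j, k x (w j)) / n) + ε := ENNReal.iInf_add.symm
    _ ≤ chebM k H L + ε := by
        gcongr
        exact le_iSup₂_of_le n (Nat.one_le_iff_ne_zero.2 hn) (le_iSup_of_le w le_rfl)

lemma chebMDual_le_qUp_of_approx (h : ∀ μ, TightProbOn μ H → ∀ ε : ℝ≥0∞, 0 < ε →
      ∃ n ≠ 0, ∃ w : Fin n → H, ∀ x ∈ L, (∑ j, k x (w j)) / n ≤ pot k μ x + ε) :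
    chebMDual k H L ≤ qUp k H L := by
  refine le_iInf₂ fun μ hμ => ENNReal.le_of_forall_pos_le_add fun ε hε _ => ?_
  obtain ⟨n, hn, w, hw⟩ := h μ hμ ε (by exact_mod_cast hε)
  calc chebMDual k H L
      ≤ ⨆ x : L, (∑ j, k x (w j)) / n :=
        iInf₂_le_of_le n (Nat.one_le_iff_ne_zero.2 hn) (iInf_le_of_le w le_rfl)
    _ ≤ (⨆ x : L, pot k μ x) + ε :=
        iSup_le fun x => (hw x x.2).trans (add_le_add_left (le_iSup (fun y : L => pot k μ y) x) _)

end Approximation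

end Kernel

section Metric

variable {E : Type*} [NormedAddCommGroup E] [MeasurableSpace E] [BorelSpace E]
  {μ : Measure E} {H : Set E}

lemma TightProbOn.exists_isSeparable (hμ : TightProbOn μ H) (hH : MeasurableSet H) :
    ∃ s ⊆ H, IsSeparable s ∧ μ sᶜ = 0 := by
  obtain ⟨hprob, hreg, hHc⟩ := hμ
  have hμH : μ H = 1 := by rwa [prob_compl_eq_zero_iff hH] at hHc
  have : ∀ n : ℕ, ∃ K ⊆ H, IsCompact K ∧ 1 - (n : ℝ≥0∞)⁻¹ < μ K := fun n =>
    hH.exists_lt_isCompact <| hμH.symm ▸ ENNReal.sub_lt_self one_ne_top one_ne_zero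
      (ENNReal.inv_ne_zero.2 (natCast_ne_top n))
  choose K hKH hK hμK using this
  refine ⟨⋃ n, K n, Set.iUnion_subset hKH, .iUnion fun n => (hK n).isSeparable,
    le_antisymm (ge_of_tendsto' ENNReal.tendsto_inv_nat_nhds_zero fun n => ?_) bot_le⟩
  calc μ (⋃ n, K n)ᶜ ≤ μ (K n)ᶜ :=
        measure_mono (Set.compl_subset_compl.2 (Set.subset_iUnion K n))
    _ = 1 - μ (K n) := prob_compl_eq_one_sub (hK n).measurableSet
    _ ≤ (n : ℝ≥0∞)⁻¹ := tsub_le_iff_left.2 (tsub_le_iff_right.1 (hμK n).le)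

lemma TightProbOn.exists_simpleFunc_lintegral_edist_lt (hμ : TightProbOn μ H)
    (hH : MeasurableSet H) (hb : IsBounded H) {ε : ℝ≥0∞} (hε : 0 < ε) :
    ∃ φ : SimpleFunc E E, (∀ y, φ y ∈ H) ∧ ∫⁻ y, edist (φ y) y ∂μ < ε := by
  obtain ⟨s, hsH, hs, hsc⟩ := hμ.exists_isSeparable hH
  have := hμ.1
  have := hs.separableSpace
  obtain ⟨y₀, hy₀⟩ : s.Nonempty := by
    by_contra h
    simp [Set.not_nonempty_iff_eq_empty.1 h] at hsc
  have hae : ∀ᵐ y ∂μ, y ∈ s := ae_iff.2 hsc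
  have hfin : HasFiniteIntegral (fun y => y - y₀) μ := .of_bounded (C := Metric.diam H) <|
    hae.mono fun y hy => by
      rw [← dist_eq_norm]; exact Metric.dist_le_diam_of_mem hb (hsH hy) (hsH hy₀)
  obtain ⟨n, hn⟩ := ((SimpleFunc.tendsto_approxOn_L1_enorm measurable_id hy₀
    (hae.mono fun y hy => subset_closure hy) hfin).eventually (gt_mem_nhds hε)).exists
  refine ⟨SimpleFunc.approxOn id measurable_id s y₀ hy₀ n,
    fun y => hsH (SimpleFunc.approxOn_mem _ _ _ _), ?_⟩
  simpa only [edist_eq_enorm_sub, id] using hn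

theorem TightProbOn.exists_fin_pot_edist_approx (hμ : TightProbOn μ H) (hH : MeasurableSet H)
    (hb : IsBounded H) {ε : ℝ≥0∞} (hε : 0 < ε) :
    ∃ n ≠ 0, ∃ w : Fin n → H, ∀ x ∈ H,
      pot (fun x y => edist x y) μ x ≤ (∑ j, edist x (w j : E)) / n + ε ∧
      (∑ j, edist x (w j : E)) / n ≤ pot (fun x y => edist x y) μ x + ε := by
  have := hμ.1
  have hε2 : 0 < ε / 2 := ENNReal.half_pos hε.ne'
  obtain ⟨φ, hφH, hφ⟩ := hμ.exists_simpleFunc_lintegral_edist_lt hH hb hε2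
  have hφ' : ∫⁻ y, edist y (φ y) ∂μ < ε / 2 := by simpa only [edist_comm] using hφ
  obtain ⟨n, hn, w, hw⟩ := exists_fin_approx_weighted_sum (k := fun x y => edist x y) (L := H)
    (F := φ.range) (p := fun c => μ (φ ⁻¹' {c}))
    (fun c hc => by obtain ⟨y, rfl⟩ := SimpleFunc.mem_range.1 hc; exact hφH y)
    (by rw [SimpleFunc.sum_range_measure_preimage_singleton, measure_univ])
    hb.ediam_ne_top (fun x hx y hy => Metric.edist_le_ediam_of_mem hx hy) hε2
  refine ⟨n, hn, w, fun x hx => ?_⟩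
  have hdisc : ∫⁻ y, edist x (φ y) ∂μ = ∑ c ∈ φ.range, edist x c * μ (φ ⁻¹' {c}) := by
    rw [← SimpleFunc.map_lintegral, ← SimpleFunc.lintegral_eq_lintegral]; rfl
  have hφx : AEMeasurable (fun y => edist x (φ y)) μ :=
    ((continuous_const.edist continuous_id).measurable.comp φ.measurable).aemeasurable
  obtain ⟨hle, hge⟩ := hw x hx
  rw [← hdisc] at hle hge
  constructor
  · calc pot (fun x y => edist x y) μ x
        ≤ ∫⁻ y, edist x (φ y) ∂μ + ∫⁻ y, edist y (φ y) ∂μ := lintegral_edist_le_add x hφx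
      _ ≤ (∑ j, edist x (w j : E)) / n + ε / 2 + ε / 2 := add_le_add hle hφ'.le
      _ = (∑ j, edist x (w j : E)) / n + ε := by rw [add_assoc, ENNReal.add_halves]
  · calc (∑ j, edist x (w j : E)) / n
        ≤ ∫⁻ y, edist x (φ y) ∂μ + ε / 2 := hge
      _ ≤ pot (fun x y => edist x y) μ x + ∫⁻ y, edist (φ y) y ∂μ + ε / 2 := by
          gcongr
          exact lintegral_edist_le_add x (continuous_const.edist continuous_id).aemeasurable
      _ ≤ pot (fun x y => edist x y) μ x + ε / 2 + ε / 2 := by gcongr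
      _ = pot (fun x y => edist x y) μ x + ε := by rw [add_assoc, ENNReal.add_halves]

end Metric

end Rendezvous

theorem average_eq_rendezvous_sphere_general {X : Type*} [NormedAddCommGroup X]
    [MeasurableSpace X] [BorelSpace X] :
    qLow (fun x y : X => edist x y) (Metric.sphere (0 : X) 1) (Metric.sphere (0 : X) 1)
        = chebM (fun x y : X => edist x y) (Metric.sphere (0 : X) 1) (Metric.sphere (0 : X) 1) ∧
    chebM (fun x y : X => edist x y) (Metric.sphere (0 : X) 1) (Metric.sphere (0 : X) 1)
        ≤ chebMDual (fun x y : X => edist x y) (Metric.sphere (0 : X) 1) (Metric.sphere (0 : X) 1) ∧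
    chebMDual (fun x y : X => edist x y) (Metric.sphere (0 : X) 1) (Metric.sphere (0 : X) 1)
        = qUp (fun x y : X => edist x y) (Metric.sphere (0 : X) 1) (Metric.sphere (0 : X) 1) := by
  have happrox := fun (μ : Measure X) (hμ : TightProbOn μ (Metric.sphere 0 1)) ε (hε : 0 < ε) =>
    hμ.exists_fin_pot_edist_approx Metric.isClosed_sphere.measurableSet Metric.isBounded_sphere hε
  refine ⟨le_antisymm ?_ chebM_le_qLow, chebM_le_chebMDual edist_comm,
    le_antisymm ?_ qUp_le_chebMDual⟩
  · exact qLow_le_chebM_of_approx fun μ hμ ε hε =>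
      (happrox μ hμ ε hε).imp fun _ ⟨hn, w, hw⟩ => ⟨hn, w, fun x hx => (hw x hx).1⟩
  · exact chebMDual_le_qUp_of_approx fun μ hμ ε hε =>
      (happrox μ hμ ε hε).imp fun _ ⟨hn, w, hw⟩ => ⟨hn, w, fun x hx => (hw x hx).2⟩

/-- For a nonzero real normed space `X` with unit sphere `S_X` and the
kernel `k(x,y) = ‖x - y‖`, the average interval of `S_X` equals the rendezvous
interval of `S_X` and both are nonempty:
`q̲(S_X,S_X) = M(S_X) ≤ M̄(S_X) = q(S_X,S_X)`, i.e. `𝓐(X) = 𝓡(X) ≠ ∅`. -/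
theorem average_eq_rendezvous_sphere {X : Type*} [NormedAddCommGroup X]
    [NormedSpace ℝ X] [Nontrivial X] [MeasurableSpace X] [BorelSpace X] :
    qLow (fun x y : X => edist x y) (Metric.sphere (0 : X) 1) (Metric.sphere (0 : X) 1)
        = chebM (fun x y : X => edist x y) (Metric.sphere (0 : X) 1) (Metric.sphere (0 : X) 1) ∧
    chebM (fun x y : X => edist x y) (Metric.sphere (0 : X) 1) (Metric.sphere (0 : X) 1)
        ≤ chebMDual (fun x y : X => edist x y) (Metric.sphere (0 : X) 1) (Metric.sphere (0 : X) 1) ∧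
    chebMDual (fun x y : X => edist x y) (Metric.sphere (0 : X) 1) (Metric.sphere (0 : X) 1)
        = qUp (fun x y : X => edist x y) (Metric.sphere (0 : X) 1) (Metric.sphere (0 : X) 1) :=
  average_eq_rendezvous_sphere_general
end

section
/- Let X be a nonzero real normed space with unit sphere S_X and closed unit ball B_X, equipped with the kernel k(x,y) := ‖x−y‖. Then q̲(S_X,B_X) = 1; that is, sup over Borel probability measures μ concentrated on S_X of inf_{x∈B_X} U^μ(x) equals 1 (in particular, U^μ(0) = 1 for every such μ). -/
/-!
The potential of `μ` at the centre of the sphere is the average distance to the sphere, which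
is `1`; hence the infimum over the ball is at most `1`. Conversely, for a unit vector `a` the
measure `(δ_a + δ_{-a}) / 2` has potential `(‖x - a‖ + ‖x + a‖) / 2 ≥ ‖2 a‖ / 2 = 1` at every
`x`, by the triangle inequality.
-/

open MeasureTheory ENNReal
open scoped BigOperators

namespace Rendezvous

variable {X : Type*}

section Potential

variable [MeasurableSpace X]

theorem pot_eq_of_ae_eq {k : X → X → ℝ≥0∞} {μ : Measure X} [IsProbabilityMeasure μ] {x : X}
    {c : ℝ≥0∞} (h : ∀ᵐ y ∂μ, k x y = c) : pot k μ x = c := by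
  rw [pot, lintegral_congr_ae h, lintegral_const, measure_univ, mul_one]

variable [TopologicalSpace X]

theorem TightProbOn.ae_mem {μ : Measure X} {H : Set X} (hμ : TightProbOn μ H) :
    ∀ᵐ y ∂μ, y ∈ H :=
  ae_iff.mpr hμ.2.2

theorem qLow_le {k : X → X → ℝ≥0∞} {H L : Set X} {x₀ : X} (hx₀ : x₀ ∈ L) {c : ℝ≥0∞}
    (h : ∀ μ : Measure X, TightProbOn μ H → pot k μ x₀ ≤ c) : qLow k H L ≤ c :=
  iSup₂_le fun μ hμ => (iInf_le _ (⟨x₀, hx₀⟩ : L)).trans (h μ hμ)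

theorem le_qLow {k : X → X → ℝ≥0∞} {H L : Set X} {μ : Measure X} (hμ : TightProbOn μ H)
    {c : ℝ≥0∞} (h : ∀ x ∈ L, c ≤ pot k μ x) : c ≤ qLow k H L :=
  le_iSup₂_of_le (f := fun μ (_ : TightProbOn μ H) => ⨅ x : L, pot k μ x) μ hμ <|
    le_iInf fun x => h x x.2

end Potential

instance Measure.innerRegular_dirac [MeasurableSpace X] [TopologicalSpace X] (a : X) :
    (Measure.dirac a).InnerRegular := by
  refine ⟨fun U hU r hr => ?_⟩
  by_cases ha : a ∈ U
  · refine ⟨{a}, Set.singleton_subset_iff.mpr ha, isCompact_singleton, ?_⟩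
    rw [Measure.dirac_apply_of_mem (Set.mem_singleton a)]
    exact hr.trans_le prob_le_one
  · rw [Measure.dirac_apply' a hU, Set.indicator_of_notMem ha] at hr
    exact absurd hr ENNReal.not_lt_zero

noncomputable def diracAvg [MeasurableSpace X] (a b : X) : Measure X :=
  (2 : ℝ≥0∞)⁻¹ • (Measure.dirac a + Measure.dirac b)

section DiracAvg

variable [MeasurableSpace X] [MeasurableSingletonClass X]

theorem pot_diracAvg (k : X → X → ℝ≥0∞) (a b x : X) :
    pot k (diracAvg a b) x = 2⁻¹ * (k x a + k x b) := by
  simp only [pot, diracAvg, lintegral_smul_measure, lintegral_add_measure, lintegral_dirac,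
    smul_eq_mul]

theorem tightProbOn_diracAvg [TopologicalSpace X] {H : Set X} {a b : X} (ha : a ∈ H)
    (hb : b ∈ H) : TightProbOn (diracAvg a b) H := by
  refine ⟨⟨?_⟩, by unfold diracAvg; infer_instance, ?_⟩
  · simp [diracAvg, ENNReal.inv_two_add_inv_two]
  · simp [diracAvg, Measure.dirac_apply, ha, hb]

theorem edist_div_two_le_pot_diracAvg [PseudoEMetricSpace X] (a b x : X) :
    edist a b / 2 ≤ pot (fun x y : X => edist x y) (diracAvg a b) x := by
  rw [pot_diracAvg, ENNReal.div_eq_inv_mul, edist_comm x a]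
  exact mul_le_mul_right (edist_triangle a x b) _

end DiracAvg

theorem pot_edist_center_of_tightProbOn_sphere [PseudoMetricSpace X] [MeasurableSpace X]
    {μ : Measure X} {z : X} {r : ℝ} (hμ : TightProbOn μ (Metric.sphere z r)) :
    pot (fun x y : X => edist x y) μ z = ENNReal.ofReal r := by
  have := hμ.1
  refine pot_eq_of_ae_eq ?_
  filter_upwards [hμ.ae_mem] with y hy
  rw [edist_dist, dist_comm, Metric.mem_sphere.mp hy]

theorem edist_neg_eq_two_of_norm_eq_one {E : Type*} [NormedAddCommGroup E] [NormedSpace ℝ E]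
    {a : E} (ha : ‖a‖ = 1) : edist a (-a) = 2 := by
  rw [edist_dist, dist_eq_norm, sub_neg_eq_add, ← two_smul ℝ a, norm_smul, ha]
  norm_num

end Rendezvous

open Rendezvous

/-- For a nonzero real normed space `X` with unit sphere `S_X`, closed
unit ball `B_X` and kernel `k(x,y) = ‖x-y‖`, one has `q̲(S_X,B_X) = 1`; in particular
`U^μ(0) = 1` for every tight Borel probability measure `μ` concentrated on `S_X`. -/
theorem qLow_sphere_ball_eq_one {X : Type*} [NormedAddCommGroup X]
    [NormedSpace ℝ X] [Nontrivial X] [MeasurableSpace X] [BorelSpace X] :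
    qLow (fun x y : X => edist x y) (Metric.sphere (0 : X) 1) (Metric.closedBall (0 : X) 1)
        = 1 ∧
    ∀ μ : Measure X, TightProbOn μ (Metric.sphere (0 : X) 1) →
      pot (fun x y : X => edist x y) μ 0 = 1 := by
  have pot_zero : ∀ μ : Measure X, TightProbOn μ (Metric.sphere (0 : X) 1) →
      pot (fun x y : X => edist x y) μ 0 = 1 := fun μ hμ => by
    rw [pot_edist_center_of_tightProbOn_sphere hμ, ENNReal.ofReal_one]
  refine ⟨le_antisymm ?_ ?_, pot_zero⟩
  · exact qLow_le (Metric.mem_closedBall_self zero_le_one) fun μ hμ => (pot_zero μ hμ).le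
  · obtain ⟨a, ha⟩ := (NormedSpace.sphere_nonempty (E := X) (x := 0) (r := 1)).mpr zero_le_one
    have hna : ‖a‖ = 1 := mem_sphere_zero_iff_norm.mp ha
    have hna' : -a ∈ Metric.sphere (0 : X) 1 := by simpa using ha
    refine le_qLow (tightProbOn_diracAvg ha hna') fun x _ => ?_
    calc (1 : ℝ≥0∞) = edist a (-a) / 2 := by
          rw [edist_neg_eq_two_of_norm_eq_one hna, ENNReal.div_self two_ne_zero ofNat_ne_top]
      _ ≤ _ := edist_div_two_le_pot_diracAvg a (-a) x
end
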